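/- arXiv:2007.08443 — 5 statements merged into one kernel-verified Lean document; each statement's English description precedes it below -/
import Mathlib

section
/- Let r be continuous, positive, 1-periodic with R(y₁,y₀) = ∫_{y₀}^{y₁} r, and let T(ε) = (1 - exp(-R(1,0)/ε))⁻¹ ∫_0^1 exp(-R(y₀+y, y₀)/ε) dy. If r_max = max_{y∈[0,1]} r(y), then T(ε) = (ε / R(1,0)) · (1 + O(r_max/ε)) as r_max/ε → 0; more precisely there is a constant C (depending only on r) such that |T(ε) · R(1,0)/ε - 1| ≤ C · r_max/ε whenever r_max ≤ ε. -/
open MeasureTheory Real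

set_option maxHeartbeats 2000000 in
/-- Fast-forcing asymptotics of the expected transition time of the two-state
jump process: `T(ε) = (ε / R(1,0)) (1 + O(r_max/ε))`. -/
theorem jump_process_fast_forcing_asymptotics
    (r : ℝ → ℝ) (hr_cont : Continuous r) (hr_pos : ∀ x, 0 < r x)
    (hr_per : Function.Periodic r 1) :
    ∃ C > 0, ∀ ε : ℝ, 0 < ε → ∀ y₀ : ℝ,
      sSup (r '' Set.Icc 0 1) ≤ ε →
      |((1 - Real.exp (-(∫ x in (0:ℝ)..1, r x) / ε))⁻¹ *
            ∫ y in (0:ℝ)..1, Real.exp (-(∫ x in y₀..(y₀ + y), r x) / ε)) *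
          (∫ x in (0:ℝ)..1, r x) / ε - 1|
        ≤ C * sSup (r '' Set.Icc 0 1) / ε := by
  have hint : ∀ a b : ℝ, IntervalIntegrable r volume a b :=
    fun a b => hr_cont.intervalIntegrable a b
  set M := sSup (r '' Set.Icc 0 1) with hMdef
  have hbdd : BddAbove (r '' Set.Icc 0 1) := (isCompact_Icc.image hr_cont).bddAbove
  have hrM : ∀ x, r x ≤ M := by
    intro x
    have h1 : r (Int.fract x) = r x := by
      rw [Int.fract]
      simpa using hr_per.sub_int_mul_eq (x := x) ⌊x⌋
    rw [← h1]
    exact le_csSup hbdd ⟨Int.fract x, ⟨Int.fract_nonneg x, (Int.fract_lt_one x).le⟩, rfl⟩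
  have hM0 : 0 < M := lt_of_lt_of_le (hr_pos 0) (hrM 0)
  set R := ∫ x in (0:ℝ)..1, r x with hRdef
  have hR0 : 0 < R :=
    intervalIntegral.intervalIntegral_pos_of_pos (hint 0 1) hr_pos one_pos
  have hRM : R ≤ M := by
    have h := intervalIntegral.integral_mono_on (μ := volume) (a := 0) (b := 1)
      zero_le_one (hint 0 1) intervalIntegrable_const (fun x _ => hrM x)
    simpa using h
  refine ⟨3, by norm_num, fun ε hε y₀ hMε => ?_⟩
  set a := R / ε with hadef
  have ha0 : 0 < a := div_pos hR0 hε
  have haM : a ≤ M / ε := by rw [hadef]; gcongr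
  have ha1 : a ≤ 1 := by
    rw [hadef, div_le_one hε]; exact hRM.trans hMε
  have heM : M / ε ≤ 1 := by rw [div_le_one hε]; exact hMε
  have heM0 : 0 < M / ε := div_pos hM0 hε
  -- properties of the inner primitive
  have hfc : Continuous fun y => ∫ x in y₀..(y₀ + y), r x :=
    (intervalIntegral.continuous_primitive hint y₀).comp (continuous_const.add continuous_id)
  have hf0 : ∀ y ∈ Set.Icc (0:ℝ) 1, 0 ≤ ∫ x in y₀..(y₀ + y), r x := by
    intro y hy
    exact intervalIntegral.integral_nonneg (by linarith [hy.1]) (fun x _ => (hr_pos x).le)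
  have hfM : ∀ y ∈ Set.Icc (0:ℝ) 1, (∫ x in y₀..(y₀ + y), r x) ≤ M * y := by
    intro y hy
    have h := intervalIntegral.integral_mono_on (μ := volume) (a := y₀) (b := y₀ + y)
      (by linarith [hy.1]) (hint _ _) intervalIntegrable_const (fun x _ => hrM x)
    simpa [mul_comm] using h
  -- the outer integral I
  set I := ∫ y in (0:ℝ)..1, Real.exp (-(∫ x in y₀..(y₀ + y), r x) / ε) with hIdef
  have hgc : Continuous fun y => Real.exp (-(∫ x in y₀..(y₀ + y), r x) / ε) :=
    Real.continuous_exp.comp ((hfc.neg).div_const ε)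
  have hI1 : I ≤ 1 := by
    have h := intervalIntegral.integral_mono_on (μ := volume) (a := 0) (b := 1)
      zero_le_one (hgc.intervalIntegrable 0 1) intervalIntegrable_const
      (fun y hy => by
        have hx : -(∫ x in y₀..(y₀ + y), r x) / ε ≤ 0 :=
          div_nonpos_iff.mpr (Or.inr ⟨by linarith [hf0 y hy], hε.le⟩)
        calc Real.exp (-(∫ x in y₀..(y₀ + y), r x) / ε) ≤ Real.exp 0 := Real.exp_le_exp.mpr hx
          _ = 1 := Real.exp_zero)
    rw [hIdef]
    simpa using h
  have hIlow : 1 - M / (2 * ε) ≤ I := by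
    have hlin : ∀ y ∈ Set.Icc (0:ℝ) 1,
        1 - M / ε * y ≤ Real.exp (-(∫ x in y₀..(y₀ + y), r x) / ε) := by
      intro y hy
      have h1 : (∫ x in y₀..(y₀ + y), r x) ≤ M * y := hfM y hy
      have h2 : -(M * y / ε) ≤ -(∫ x in y₀..(y₀ + y), r x) / ε := by
        rw [neg_div]
        apply neg_le_neg
        gcongr
      have h3 : 1 - M * y / ε ≤ Real.exp (-(M * y / ε)) := by
        linarith [Real.add_one_le_exp (-(M * y / ε))]
      have h4 : Real.exp (-(M * y / ε)) ≤ Real.exp (-(∫ x in y₀..(y₀ + y), r x) / ε) :=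
        Real.exp_le_exp.mpr h2
      have h5 : M / ε * y = M * y / ε := by ring
      linarith
    have hmono := intervalIntegral.integral_mono_on (μ := volume) (a := 0) (b := 1)
      zero_le_one ((by continuity : Continuous fun y : ℝ => 1 - M / ε * y).intervalIntegrable 0 1)
      (hgc.intervalIntegrable 0 1) hlin
    have hcalc : (∫ y in (0:ℝ)..1, (1 - M / ε * y)) = 1 - M / (2 * ε) := by
      rw [intervalIntegral.integral_sub intervalIntegrable_const
        ((by continuity : Continuous fun y : ℝ => M / ε * y).intervalIntegrable 0 1)]
      rw [intervalIntegral.integral_const_mul, integral_id, intervalIntegral.integral_const]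
      norm_num
      ring
    rw [hIdef, ← hcalc]
    exact hmono
  -- denominator bounds
  set D := 1 - Real.exp (-R / ε) with hDdef
  clear_value D I a R M
  have hexpD : Real.exp (-R / ε) = Real.exp (-a) := by rw [hadef, neg_div]
  have hDle : D ≤ a := by
    have := Real.add_one_le_exp (-a)
    rw [hDdef, hexpD]; linarith
  have hDge : a - 3/4 * a^2 ≤ D := by
    have habs : |(-a)| ≤ 1 := by rw [abs_neg, abs_of_pos ha0]; exact ha1
    have hb := Real.exp_bound habs (n := 2) (by norm_num)
    have hsum : (∑ m ∈ Finset.range 2, (-a) ^ m / m.factorial) = 1 - a := by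
      norm_num [Finset.sum_range_succ, sub_eq_add_neg]
    rw [hsum] at hb
    have h := (abs_le.mp hb).2
    rw [abs_neg, abs_of_pos ha0] at h
    norm_num [Nat.factorial] at h
    rw [hDdef, hexpD]
    nlinarith [h]
  have hD0 : 0 < D := by
    have h1 : 0 < a * (1 - 3/4 * a) := mul_pos ha0 (by linarith)
    have h2 : a * (1 - 3/4 * a) = a - 3/4 * a^2 := by ring
    linarith
  -- rewrite the main expression
  have hDne : D ≠ 0 := hD0.ne'
  have hεne : ε ≠ 0 := hε.ne'
  have hEq : (D⁻¹ * I) * R / ε - 1 = I * a / D - 1 := by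
    rw [hadef]
    ring
  rw [hEq]
  -- final bounds
  have hQup : I * a / D - 1 ≤ 3 * (M / ε) := by
    have h1 : I * a ≤ a := by nlinarith
    have h2 : I * a / D ≤ a / D := (div_le_div_iff_of_pos_right hD0).mpr h1
    have h3 : a / D ≤ 1 + 3 * a := by
      rw [div_le_iff₀ hD0]
      have key : a ≤ (1 + 3*a) * (a - 3/4*a^2) := by
        nlinarith [mul_nonneg (sq_nonneg a) (by linarith : (0:ℝ) ≤ 1 - a)]
      have key2 : (1 + 3*a) * (a - 3/4*a^2) ≤ (1 + 3*a) * D :=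
        mul_le_mul_of_nonneg_left hDge (by linarith)
      linarith
    linarith
  have hQlo : 1 - 3 * (M / ε) ≤ I * a / D := by
    have h1 : (1:ℝ) ≤ a / D := (one_le_div hD0).mpr hDle
    have h2 : 0 ≤ 1 - M / (2 * ε) := by
      have : M / (2 * ε) ≤ 1 := by
        rw [div_le_one (by linarith)]; linarith
      linarith
    have h3 : (1 - M / (2 * ε)) * (a / D) ≤ I * a / D := by
      rw [mul_div_assoc']
      exact (div_le_div_iff_of_pos_right hD0).mpr (by nlinarith)
    have h4 : (1 - M / (2 * ε)) * 1 ≤ (1 - M / (2 * ε)) * (a / D) :=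
      mul_le_mul_of_nonneg_left h1 h2
    have h5 : M / (2 * ε) ≤ 3 * (M / ε) := by
      rw [div_mul_eq_div_div_swap]
      nlinarith
    nlinarith
  rw [abs_le]
  have h6 : 3 * M / ε = 3 * (M / ε) := by ring
  constructor
  · rw [h6]; linarith
  · rw [h6]; linarith
end

section
/- Let λ : ℝ → ℝ be continuous, positive, 1-periodic, A : ℝ → ℝ continuous 1-periodic, Λ(y₂,y₁) = ∫_{y₁}^{y₂} λ, and ε > 0. Then the function δ(y) = (ε(e^{Λ(1,0)/ε} - 1))⁻¹ ∫_y^{y+1} λ(ȳ) A(ȳ) e^{Λ(ȳ,y)/ε} dȳ is the unique 1-periodic solution of the ODE ε δ'(y) = -λ(y)(δ(y) - A(y)). -/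
open MeasureTheory Real

/-- The explicit 1-periodic solution of `ε δ' = -λ (δ - A)`. -/
noncomputable def deltaSol (lam A : ℝ → ℝ) (ε : ℝ) (y : ℝ) : ℝ :=
  (ε * (Real.exp ((∫ x in (0:ℝ)..1, lam x) / ε) - 1))⁻¹ *
    ∫ x in y..(y + 1), lam x * A x * Real.exp ((∫ t in y..x, lam t) / ε)

/-- `δ(y) = (ε(e^{Λ(1,0)/ε}-1))⁻¹ ∫_y^{y+1} λ(ȳ)A(ȳ)e^{Λ(ȳ,y)/ε} dȳ` is the unique
1-periodic solution of the ODE `ε δ'(y) = -λ(y)(δ(y) - A(y))`. -/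
theorem deltaSol_unique_periodic_solution
    (lam A : ℝ → ℝ) (hlam_cont : Continuous lam) (hlam_pos : ∀ y, 0 < lam y)
    (hlam_per : Function.Periodic lam 1) (hA_cont : Continuous A)
    (hA_per : Function.Periodic A 1) (ε : ℝ) (hε : 0 < ε) :
    (Function.Periodic (deltaSol lam A ε) 1 ∧
      ∀ y : ℝ, HasDerivAt (deltaSol lam A ε)
        (-(lam y) * (deltaSol lam A ε y - A y) / ε) y) ∧
    ∀ f : ℝ → ℝ, Function.Periodic f 1 →
      (∀ y, HasDerivAt f (-(lam y) * (f y - A y) / ε) y) →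
      ∀ y, f y = deltaSol lam A ε y := by
  have hε' : ε ≠ 0 := hε.ne'
  set L : ℝ → ℝ := fun y => ∫ x in (0:ℝ)..y, lam x with hLdef
  have hint : ∀ a b : ℝ, IntervalIntegrable lam volume a b :=
    fun a b => hlam_cont.intervalIntegrable a b
  have hLd : ∀ y, HasDerivAt L (lam y) y := fun y =>
    intervalIntegral.integral_hasDerivAt_right (hint 0 y)
      hlam_cont.stronglyMeasurable.stronglyMeasurableAtFilter hlam_cont.continuousAt
  have hLsub : ∀ y x : ℝ, (∫ t in y..x, lam t) = L x - L y := fun y x =>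
    (intervalIntegral.integral_interval_sub_left (hint 0 x) (hint 0 y)).symm
  have hL1pos : 0 < L 1 :=
    intervalIntegral.intervalIntegral_pos_of_pos (hint 0 1) (fun x => hlam_pos x) one_pos
  set E : ℝ := Real.exp (L 1 / ε) with hEdef
  have hE1 : 1 < E := Real.one_lt_exp_iff.mpr (div_pos hL1pos hε)
  have hE1' : E - 1 ≠ 0 := sub_ne_zero.mpr hE1.ne'
  set c : ℝ := ε * (E - 1) with hcdef
  have hc : c ≠ 0 := mul_ne_zero hε' hE1'
  have hLadd : ∀ y, L (y + 1) = L y + L 1 := by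
    intro y
    have h1 : (∫ x in y..y + 1, lam x) = ∫ x in (0:ℝ)..(0:ℝ) + 1, lam x :=
      hlam_per.intervalIntegral_add_eq y 0
    have h2 := hLsub y (y + 1)
    rw [h2] at h1
    have : (∫ x in (0:ℝ)..(0:ℝ) + 1, lam x) = L 1 := by norm_num [hLdef]
    rw [this] at h1
    linarith
  set h : ℝ → ℝ := fun x => lam x * A x * Real.exp (L x / ε) with hhdef
  have hLcont : Continuous L := by
    have : Differentiable ℝ L := fun y => (hLd y).differentiableAt
    exact this.continuous
  have hhcont : Continuous h := by
    exact (hlam_cont.mul hA_cont).mul ((hLcont.div_const ε).rexp)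
  have hhint : ∀ a b : ℝ, IntervalIntegrable h volume a b :=
    fun a b => hhcont.intervalIntegrable a b
  set H : ℝ → ℝ := fun y => ∫ x in (0:ℝ)..y, h x with hHdef
  have hHd : ∀ y, HasDerivAt H (h y) y := fun y =>
    intervalIntegral.integral_hasDerivAt_right (hhint 0 y)
      hhcont.stronglyMeasurable.stronglyMeasurableAtFilter hhcont.continuousAt
  set G : ℝ → ℝ := fun y => H (y + 1) - H y with hGdef
  have hGeq : ∀ y : ℝ, (∫ x in y..y + 1, h x) = G y := fun y =>
    (intervalIntegral.integral_interval_sub_left (hhint 0 (y + 1)) (hhint 0 y)).symm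
  have hGd : ∀ y, HasDerivAt G (h (y + 1) - h y) y := by
    intro y
    have h1 : HasDerivAt (fun y => H (y + 1)) (h (y + 1)) y := by
      have := (hHd (y + 1)).comp y ((hasDerivAt_id y).add_const 1)
      exact this.congr_deriv (mul_one _)
    exact h1.sub (hHd y)
  have hh1 : ∀ x, h (x + 1) = h x * E := by
    intro x
    simp only [hhdef, hEdef, hlam_per x, hA_per x, hLadd x, add_div, Real.exp_add]
    ring
  set g : ℝ → ℝ := fun y => Real.exp (-(L y) / ε) * G y with hgdef
  have hdelta : ∀ y, deltaSol lam A ε y = c⁻¹ * g y := by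
    intro y
    have hintegrand : ∀ x : ℝ, lam x * A x * Real.exp ((∫ t in y..x, lam t) / ε)
        = h x * Real.exp (-(L y) / ε) := by
      intro x
      rw [hLsub y x, hhdef]
      rw [show (L x - L y) / ε = L x / ε + -(L y) / ε by ring, Real.exp_add]
      ring
    unfold deltaSol
    rw [show (∫ x in y..y + 1, lam x * A x * Real.exp ((∫ t in y..x, lam t) / ε))
        = ∫ x in y..y + 1, h x * Real.exp (-(L y) / ε) by
      exact intervalIntegral.integral_congr fun x _ => hintegrand x]
    rw [intervalIntegral.integral_mul_const, hGeq]
    rw [hgdef, hcdef, hEdef, hLdef]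
    ring
  have hgper : ∀ y : ℝ, g (y + 1) = g y := by
    intro y
    have hGp : G (y + 1) = G y * E := by
      rw [hGdef]
      have e1 : H (y + 1 + 1) - H (y + 1) = ∫ x in (y+1)..(y+1)+1, h x :=
        intervalIntegral.integral_interval_sub_left (hhint 0 (y + 1 + 1)) (hhint 0 (y + 1))
      have e2 : (∫ x in y..y+1, h (x + 1)) = ∫ x in (y+1)..(y+1)+1, h x := by
        rw [intervalIntegral.integral_comp_add_right]
      have e3 : (∫ x in y..y+1, h (x + 1)) = (∫ x in y..y+1, h x) * E := by
        rw [show (fun x => h (x + 1)) = fun x => h x * E from funext hh1]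
        exact intervalIntegral.integral_mul_const E h
      simp only at e1 e2 e3 ⊢
      rw [e1, ← e2, e3, hGeq]
    rw [hgdef]
    simp only
    rw [hGp, hLadd y]
    rw [show -(L y + L 1) / ε = -(L y) / ε + -(L 1 / ε) by ring, Real.exp_add,
      Real.exp_neg, hEdef]
    field_simp
  have hδd : ∀ y, HasDerivAt (deltaSol lam A ε)
      (-(lam y) * (deltaSol lam A ε y - A y) / ε) y := by
    intro y
    have hexp_d : HasDerivAt (fun y => Real.exp (-(L y) / ε))
        (Real.exp (-(L y) / ε) * (-(lam y) / ε)) y := (((hLd y).neg).div_const ε).exp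
    have hg_d : HasDerivAt g
        (Real.exp (-(L y) / ε) * (-(lam y) / ε) * G y
          + Real.exp (-(L y) / ε) * (h (y + 1) - h y)) y := hexp_d.mul (hGd y)
    have hδd0 := hg_d.const_mul c⁻¹
    have key : c⁻¹ * (Real.exp (-(L y) / ε) * (-(lam y) / ε) * G y
          + Real.exp (-(L y) / ε) * (h (y + 1) - h y))
        = -(lam y) * (deltaSol lam A ε y - A y) / ε := by
      have hee : Real.exp (-(L y) / ε) * Real.exp (L y / ε) = 1 := by
        rw [← Real.exp_add, show -(L y) / ε + L y / ε = 0 by ring, Real.exp_zero]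
      have e1 : Real.exp (-(L y) / ε) * (-(lam y) / ε) * G y
            + Real.exp (-(L y) / ε) * (h (y + 1) - h y)
          = (-(lam y) / ε) * g y + lam y * A y * (E - 1) := by
        rw [hh1 y, hhdef, hgdef]
        simp only
        linear_combination (lam y * A y * (E - 1)) * hee
      rw [e1, hdelta y, hcdef]
      field_simp
      ring
    have hfun : deltaSol lam A ε = fun y => c⁻¹ * g y := funext hdelta
    have hδd0' : HasDerivAt (deltaSol lam A ε)
        (c⁻¹ * (Real.exp (-(L y) / ε) * (-(lam y) / ε) * G y
          + Real.exp (-(L y) / ε) * (h (y + 1) - h y))) y := by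
      rw [hfun]; exact hδd0
    convert hδd0' using 1
    exact key.symm
  have hδper : Function.Periodic (deltaSol lam A ε) 1 := by
    intro y
    rw [hdelta, hdelta, hgper y]
  refine ⟨⟨hδper, hδd⟩, ?_⟩
  intro f hfper hfd
  set u : ℝ → ℝ := fun y => f y - deltaSol lam A ε y with hudef
  have hud : ∀ y, HasDerivAt u (-(lam y) * u y / ε) y := by
    intro y
    have := (hfd y).sub (hδd y)
    refine this.congr_deriv ?_
    rw [hudef]; ring
  set φ : ℝ → ℝ := fun y => u y * Real.exp (L y / ε) with hφdef
  have hφd : ∀ y, HasDerivAt φ 0 y := by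
    intro y
    have := (hud y).mul ((hLd y).div_const ε).exp
    refine this.congr_deriv ?_
    field_simp
    ring
  have hφconst : ∀ y, φ y = φ 0 := fun y =>
    is_const_of_deriv_eq_zero (fun x => (hφd x).differentiableAt)
      (fun x => (hφd x).deriv) y 0
  have hL0 : L 0 = 0 := by simp [hLdef]
  have hu1 : u 1 = u 0 := by
    have := hfper 0
    have h2 := hδper 0
    simp only [zero_add] at this h2
    rw [hudef]; simp only [this, h2]
  have hu0 : u 0 = 0 := by
    have := hφconst 1
    simp only [hφdef, hL0, hu1, zero_div, Real.exp_zero, mul_one] at this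
    have hEne : Real.exp (L 1 / ε) ≠ 1 := by rw [← hEdef]; exact hE1.ne'
    by_contra h0
    have h1 : u 0 * Real.exp (L 1 / ε) = u 0 * 1 := by rw [mul_one]; exact this
    exact hEne (mul_left_cancel₀ h0 h1)
  intro y
  have hcy := hφconst y
  simp only [hφdef, hL0, hu0, zero_div, Real.exp_zero, mul_one, zero_mul] at hcy
  have huy : u y = 0 := by
    have hpos := Real.exp_pos (L y / ε)
    rcases mul_eq_zero.mp hcy with h | h
    · exact h
    · exact absurd h hpos.ne'
  have h2 : f y - deltaSol lam A ε y = 0 := huy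
  linarith
end

section
/- Let λ, A be continuous 1-periodic functions with λ > 0, and let δ be the unique 1-periodic solution of ε δ' = -λ(δ - A). In the superadiabatic regime, δ(y) = A(y)(1 + O(ε/λ_min)) where λ_min = min_{y∈[0,1]} λ(y): more precisely, if A is C¹ then there is a constant C depending only on λ and A such that |δ(y) - A(y)| ≤ C ε / λ_min for all y, whenever ε ≤ λ_min. -/
open MeasureTheory Real

/-- Superadiabatic regime: the unique 1-periodic solution of `ε δ' = -λ (δ - A)`
tracks `A`, with `|δ(y) - A(y)| ≤ C ε / λ_min` whenever `ε ≤ λ_min`. -/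
theorem superadiabatic_tracking
    (lam A : ℝ → ℝ) (hlam_cont : Continuous lam) (hlam_pos : ∀ y, 0 < lam y)
    (hlam_per : Function.Periodic lam 1)
    (hA : ContDiff ℝ 1 A) (hA_per : Function.Periodic A 1) :
    ∃ C > 0, ∀ ε : ℝ, 0 < ε → ∀ δ : ℝ → ℝ,
      Function.Periodic δ 1 →
      (∀ y, HasDerivAt δ (-(lam y) * (δ y - A y) / ε) y) →
      ε ≤ sInf (lam '' Set.Icc 0 1) →
      ∀ y, |δ y - A y| ≤ C * ε / sInf (lam '' Set.Icc 0 1) := by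
  have hAd : Continuous (deriv A) := hA.continuous_deriv le_rfl
  set M : ℝ := sSup ((fun y => |deriv A y|) '' Set.Icc 0 1) with hM
  have hne : (Set.Icc (0:ℝ) 1).Nonempty := ⟨0, by norm_num⟩
  have hMb : ∀ y ∈ Set.Icc (0:ℝ) 1, |deriv A y| ≤ M := fun y hy =>
    le_csSup ((isCompact_Icc.image (hAd.abs)).bddAbove) ⟨y, hy, rfl⟩
  have hM0 : 0 ≤ M := le_trans (abs_nonneg _) (hMb 0 (by norm_num))
  set L : ℝ := sInf (lam '' Set.Icc 0 1) with hL
  have hLmem : L ∈ lam '' Set.Icc 0 1 :=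
    (isCompact_Icc.image hlam_cont).sInf_mem (hne.image _)
  have hL0 : 0 < L := by obtain ⟨x, -, hx⟩ := hLmem; exact hx ▸ hlam_pos x
  have hLle : ∀ y ∈ Set.Icc (0:ℝ) 1, L ≤ lam y := fun y hy =>
    csInf_le ((isCompact_Icc.image hlam_cont).bddBelow) ⟨y, hy, rfl⟩
  refine ⟨M + 1, by positivity, fun ε hε δ hδper hδ hεL y => ?_⟩
  set u : ℝ → ℝ := fun y => δ y - A y with hu
  have huper : Function.Periodic u 1 := hδper.sub hA_per
  have hud : ∀ y, HasDerivAt u (-(lam y) * (u y) / ε - deriv A y) y := fun y =>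
    (hδ y).sub ((hA.differentiable one_ne_zero) y).hasDerivAt
  have hucont : Continuous u := by
    have : Differentiable ℝ u := fun y => (hud y).differentiableAt
    exact this.continuous
  -- fract trick
  have hfr : ∀ z : ℝ, u (Int.fract z) = u z := by
    intro z
    rw [Int.fract]
    simpa using huper.sub_int_mul_eq (x := z) ⌊z⌋
  have hfrmem : ∀ z : ℝ, Int.fract z ∈ Set.Icc (0:ℝ) 1 :=
    fun z => ⟨Int.fract_nonneg z, (Int.fract_lt_one z).le⟩
  -- key: at a global extremum point y₀ ∈ [0,1], |u y₀| ≤ ε * M / L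
  have key : ∀ y₀ : ℝ, y₀ ∈ Set.Icc (0:ℝ) 1 → (∀ z, u z ≤ u y₀) ∨ (∀ z, u y₀ ≤ u z) →
      |u y₀| ≤ ε * M / L := by
    intro y₀ hy₀ hext
    have hd0 : -(lam y₀) * (u y₀) / ε - deriv A y₀ = 0 := by
      rcases hext with h | h
      · exact IsLocalMax.hasDerivAt_eq_zero
          (Filter.Eventually.of_forall fun z => h z) (hud y₀)
      · exact IsLocalMin.hasDerivAt_eq_zero
          (Filter.Eventually.of_forall fun z => h z) (hud y₀)
    have hval : u y₀ = -ε * deriv A y₀ / lam y₀ := by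
      have hl := (hlam_pos y₀).ne'
      field_simp at hd0 ⊢
      nlinarith [hd0]
    rw [hval]
    rw [abs_div, abs_of_pos (hlam_pos y₀), abs_mul, abs_neg, abs_of_pos hε]
    exact div_le_div₀ (by positivity) (mul_le_mul_of_nonneg_left (hMb y₀ hy₀) hε.le)
      hL0 (hLle y₀ hy₀)
  obtain ⟨ymax, hymax, hmax⟩ := isCompact_Icc.exists_isMaxOn hne hucont.continuousOn
  obtain ⟨ymin, hymin, hmin⟩ := isCompact_Icc.exists_isMinOn hne hucont.continuousOn
  have hgmax : ∀ z, u z ≤ u ymax := fun z => (hfr z) ▸ hmax (hfrmem z)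
  have hgmin : ∀ z, u ymin ≤ u z := fun z => (hfr z) ▸ hmin (hfrmem z)
  have h1 := key ymax hymax (Or.inl hgmax)
  have h2 := key ymin hymin (Or.inr hgmin)
  have hle : u y ≤ ε * M / L := le_trans (hgmax y) (abs_le.mp h1).2
  have hge : -(ε * M / L) ≤ u y := le_trans (abs_le.mp h2).1 (hgmin y)
  calc |δ y - A y| ≤ ε * M / L := abs_le.mpr ⟨hge, hle⟩
    _ ≤ (M + 1) * ε / L := by gcongr ?_ / L; nlinarith
end

section
/- Let V₀ be a smooth double-well potential on ℝ with wells at x₋* < x₊*, saddle x₀*, ω₀ = √(-V₀''(x₀*)) > 0. Then the normalization N(σ) = ∫_{x₋*}^{x₊*} e^{2V₀(x)/σ²} dx satisfies N(σ) = (√π σ / ω₀) e^{2V₀(x₀*)/σ²} (1 + O(σ²)) as σ → 0; i.e., (ω₀ N(σ) e^{-2V₀(x₀*)/σ²})/(√π σ) → 1 as σ → 0, with error rate O(σ²) if V₀ is C⁴ near x₀*. -/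
open MeasureTheory Real

lemma le_exp_self (u : ℝ) : u ≤ Real.exp u :=
  le_trans (by linarith) (Real.add_one_le_exp u)

lemma exp_neg_le_inv {u : ℝ} (hu : 0 < u) : Real.exp (-u) ≤ 1 / u := by
  have h := le_exp_self u
  rw [Real.exp_neg, inv_le_comm₀ (Real.exp_pos u) (by positivity), one_div, inv_inv]
  exact h

lemma exp_neg_le_cube {u : ℝ} (hu : 0 < u) : Real.exp (-u) ≤ 27 / u ^ 3 := by
  have h := le_exp_self (u/3)
  have h3 : (u/3)^3 ≤ (Real.exp (u/3))^3 := pow_le_pow_left₀ (by linarith) h 3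
  rw [← Real.exp_nat_mul] at h3
  have hc : ((3:ℕ):ℝ) * (u/3) = u := by push_cast; ring
  rw [hc] at h3
  rw [Real.exp_neg, le_div_iff₀ (by positivity), inv_mul_eq_div, div_le_iff₀ (Real.exp_pos u)]
  nlinarith [Real.exp_pos u]

-- exp taylor second order
lemma exp_taylor_bd (w : ℝ) : |Real.exp (-w) - 1 + w| ≤ 3 * w^2 * Real.exp |w| := by
  rcases le_or_gt |w| 1 with h | h
  · have h2 : |(-w)| ≤ 1 := by rwa [abs_neg]
    have := Real.abs_exp_sub_one_sub_id_le h2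
    have he : (1:ℝ) ≤ Real.exp |w| := Real.one_le_exp (abs_nonneg w)
    calc |Real.exp (-w) - 1 + w| = |Real.exp (-w) - 1 - (-w)| := by ring_nf
      _ ≤ (-w)^2 := this
      _ = w^2 := by ring
      _ ≤ 3 * w^2 * Real.exp |w| := by nlinarith [sq_nonneg w]
  · have h1 : |w| ≤ w^2 := by nlinarith [abs_nonneg w, sq_abs w]
    have he : (1:ℝ) ≤ Real.exp |w| := Real.one_le_exp (abs_nonneg w)
    have hew : Real.exp (-w) ≤ Real.exp |w| := Real.exp_le_exp.mpr (neg_le_abs w)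
    calc |Real.exp (-w) - 1 + w| ≤ Real.exp (-w) + 1 + |w| := by
          have := abs_nonneg w
          have := (Real.exp_pos (-w)).le
          cases abs_cases (Real.exp (-w) - 1 + w) <;> cases abs_cases w <;> linarith
      _ ≤ Real.exp |w| + Real.exp |w| * w^2 + w^2 * Real.exp |w| := by nlinarith
      _ ≤ 3 * w^2 * Real.exp |w| := by nlinarith [Real.exp_pos (|w|), sq_nonneg w, h1, he]

lemma mono_of_deriv {φ φ' : ℝ → ℝ} {lo hi : ℝ} (hle : lo ≤ hi)
    (hder : ∀ s, HasDerivAt φ (φ' s) s)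
    (hpos : ∀ s ∈ Set.Icc lo hi, 0 ≤ φ' s) : φ lo ≤ φ hi := by
  have hd : Differentiable ℝ φ := fun s => (hder s).differentiableAt
  have := monotoneOn_of_deriv_nonneg (convex_Icc lo hi) hd.continuous.continuousOn
    hd.differentiableOn
    (fun s hs => by rw [(hder s).deriv]; exact hpos s (interior_subset hs))
  exact this (Set.left_mem_Icc.2 hle) (Set.right_mem_Icc.2 hle) hle

lemma poly_bound {h h' : ℝ → ℝ} {x0 C lo hi : ℝ} (k : ℕ) (hC : 0 ≤ C)
    (hlo : lo ≤ x0) (hhi : x0 ≤ hi)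
    (hder : ∀ s, HasDerivAt h (h' s) s) (h0 : h x0 = 0)
    (hb : ∀ s ∈ Set.Icc lo hi, |h' s| ≤ C * |s - x0| ^ k) :
    ∀ t ∈ Set.Icc lo hi, |h t| ≤ C * |t - x0| ^ (k + 1) := by
  intro t ht
  have hzp : (0:ℝ) ^ (k+1) = 0 := zero_pow (Nat.succ_ne_zero k)
  have hpow : ∀ s : ℝ, HasDerivAt (fun s => C * (s - x0) ^ (k+1))
      (C * ((k+1) * (s - x0) ^ k)) s := by
    intro s
    have := (((hasDerivAt_id s).sub_const x0).pow (k+1)).const_mul C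
    simpa using this
  have hpow' : ∀ s : ℝ, HasDerivAt (fun s => C * (x0 - s) ^ (k+1))
      (-(C * ((k+1) * (x0 - s) ^ k))) s := by
    intro s
    have h1 : HasDerivAt (fun s : ℝ => x0 - s) (-1) s := by
      simpa using (hasDerivAt_id s).const_sub x0
    have := (h1.pow (k+1)).const_mul C
    simp only [Nat.add_sub_cancel] at this
    refine this.congr_deriv ?_; push_cast; ring
  rcases le_total x0 t with hxt | hxt
  · have hsub : Set.Icc x0 t ⊆ Set.Icc lo hi := Set.Icc_subset_Icc hlo ht.2
    have habs : ∀ s ∈ Set.Icc x0 t, |h' s| ≤ C * (s - x0) ^ k := by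
      intro s hs
      have := hb s (hsub hs)
      rwa [abs_of_nonneg (by linarith [hs.1] : (0:ℝ) ≤ s - x0)] at this
    have key : ∀ s ∈ Set.Icc x0 t, C * (s - x0) ^ k ≤ C * ((k+1) * (s - x0) ^ k) := by
      intro s hs
      have h3 : (0:ℝ) ≤ C * (s - x0) ^ k :=
        mul_nonneg hC (pow_nonneg (by linarith [hs.1]) k)
      nlinarith [Nat.cast_nonneg (α := ℝ) k]
    have hup : h t ≤ C * (t - x0) ^ (k+1) := by
      have hm := mono_of_deriv (φ := fun s => C * (s - x0) ^ (k+1) - h s)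
        (φ' := fun s => C * ((k+1) * (s - x0) ^ k) - h' s) hxt
        (fun s => (hpow s).sub (hder s))
        (fun s hs => by
          have h2 : h' s ≤ C * (s - x0) ^ k := (abs_le.mp (habs s hs)).2
          linarith [key s hs])
      simp only [sub_self, hzp, mul_zero, h0, sub_zero, zero_sub, neg_zero] at hm
      linarith
    have hdn : -(C * (t - x0) ^ (k+1)) ≤ h t := by
      have hm := mono_of_deriv (φ := fun s => C * (s - x0) ^ (k+1) + h s)
        (φ' := fun s => C * ((k+1) * (s - x0) ^ k) + h' s) hxt
        (fun s => (hpow s).add (hder s))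
        (fun s hs => by
          have h2 : -(C * (s - x0) ^ k) ≤ h' s := (abs_le.mp (habs s hs)).1
          linarith [key s hs])
      simp only [sub_self, hzp, mul_zero, h0, add_zero, zero_add] at hm
      linarith
    rw [abs_of_nonneg (by linarith : (0:ℝ) ≤ t - x0), abs_le]
    exact ⟨hdn, hup⟩
  · have hsub : Set.Icc t x0 ⊆ Set.Icc lo hi := Set.Icc_subset_Icc ht.1 hhi
    have habs : ∀ s ∈ Set.Icc t x0, |h' s| ≤ C * (x0 - s) ^ k := by
      intro s hs
      have := hb s (hsub hs)
      rwa [abs_sub_comm, abs_of_nonneg (by linarith [hs.2] : (0:ℝ) ≤ x0 - s)] at this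
    have key : ∀ s ∈ Set.Icc t x0, C * (x0 - s) ^ k ≤ C * ((k+1) * (x0 - s) ^ k) := by
      intro s hs
      have h3 : (0:ℝ) ≤ C * (x0 - s) ^ k :=
        mul_nonneg hC (pow_nonneg (by linarith [hs.2]) k)
      nlinarith [Nat.cast_nonneg (α := ℝ) k]
    have hup : h t ≤ C * (x0 - t) ^ (k+1) := by
      have hm := mono_of_deriv (φ := fun s => h s - C * (x0 - s) ^ (k+1))
        (φ' := fun s => h' s - -(C * ((k+1) * (x0 - s) ^ k))) hxt
        (fun s => (hder s).sub (hpow' s))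
        (fun s hs => by
          have h2 : -(C * (x0 - s) ^ k) ≤ h' s := (abs_le.mp (habs s hs)).1
          linarith [key s hs])
      simp only [sub_self, hzp, mul_zero, h0, sub_zero, zero_sub] at hm
      linarith
    have hdn : -(C * (x0 - t) ^ (k+1)) ≤ h t := by
      have hm := mono_of_deriv (φ := fun s => -h s - C * (x0 - s) ^ (k+1))
        (φ' := fun s => -h' s - -(C * ((k+1) * (x0 - s) ^ k))) hxt
        (fun s => ((hder s).neg).sub (hpow' s))
        (fun s hs => by
          have h2 : h' s ≤ C * (x0 - s) ^ k := (abs_le.mp (habs s hs)).2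
          linarith [key s hs])
      simp only [sub_self, hzp, mul_zero, h0, neg_zero, sub_zero, zero_sub] at hm
      linarith
    rw [abs_sub_comm, abs_of_nonneg (by linarith [ht.2] : (0:ℝ) ≤ x0 - t), abs_le]
    exact ⟨hdn, hup⟩

lemma sq_le_exp {b : ℝ} (t : ℝ) (hb : 0 < b) : t^2 ≤ 4/b * Real.exp (b*t^2/4) := by
  have h : b*t^2/4 ≤ Real.exp (b*t^2/4) := le_trans (by linarith) (Real.add_one_le_exp _)
  have h2 := mul_le_mul_of_nonneg_left h (by positivity : (0:ℝ) ≤ 4/b)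
  have h3 : 4/b*(b*t^2/4) = t^2 := by field_simp
  linarith

lemma odd_cube_int (b δ : ℝ) : (∫ t in (-δ)..δ, t^3 * Real.exp (-b * t^2)) = 0 := by
  have hc : Continuous fun t : ℝ => t^3 * Real.exp (-b * t^2) := by continuity
  have h1 : (∫ t in (-δ)..(0:ℝ), t^3 * Real.exp (-b * t^2))
      + (∫ t in (0:ℝ)..δ, t^3 * Real.exp (-b * t^2))
      = ∫ t in (-δ)..δ, t^3 * Real.exp (-b * t^2) :=
    intervalIntegral.integral_add_adjacent_intervals
      (hc.intervalIntegrable _ _) (hc.intervalIntegrable _ _)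
  have h2 : (∫ t in (0:ℝ)..δ, (-t)^3 * Real.exp (-b * (-t)^2))
      = ∫ t in (-δ)..(-(0:ℝ)), t^3 * Real.exp (-b * t^2) :=
    intervalIntegral.integral_comp_neg (fun t => t^3 * Real.exp (-b * t^2))
  simp only [neg_zero] at h2
  have h3 : (∫ t in (0:ℝ)..δ, (-t)^3 * Real.exp (-b * (-t)^2))
      = -∫ t in (0:ℝ)..δ, t^3 * Real.exp (-b * t^2) := by
    rw [← intervalIntegral.integral_neg]
    congr 1; funext t; ring_nf
  rw [h3] at h2
  linarith [h1, h2]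

lemma gauss_tail {b δ : ℝ} (hb : 0 < b) (hδ : 0 ≤ δ) :
    |(∫ t in (-δ)..δ, Real.exp (-b * t^2)) - Real.sqrt (π / b)|
      ≤ Real.exp (-(b*δ^2)/2) * Real.sqrt (2*π/b) := by
  have hf : Integrable fun t : ℝ => Real.exp (-b * t^2) := integrable_exp_neg_mul_sq hb
  have hg : Integrable fun t : ℝ => Real.exp (-(b*δ^2)/2) * Real.exp (-(b/2) * t^2) :=
    (integrable_exp_neg_mul_sq (by linarith)).const_mul _
  have hIoc : (∫ t in (-δ)..δ, Real.exp (-b * t^2))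
      = ∫ t in Set.Ioc (-δ) δ, Real.exp (-b * t^2) :=
    intervalIntegral.integral_of_le (by linarith)
  have hsplit : (∫ t in Set.Ioc (-δ) δ, Real.exp (-b * t^2))
      + (∫ t in (Set.Ioc (-δ) δ)ᶜ, Real.exp (-b * t^2)) = ∫ t : ℝ, Real.exp (-b * t^2) :=
    integral_add_compl measurableSet_Ioc hf
  have hcompl_nonneg : 0 ≤ ∫ t in (Set.Ioc (-δ) δ)ᶜ, Real.exp (-b * t^2) :=
    setIntegral_nonneg measurableSet_Ioc.compl (fun t _ => (Real.exp_pos _).le)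
  have hptwise : ∀ t ∈ (Set.Ioc (-δ) δ)ᶜ,
      Real.exp (-b * t^2) ≤ Real.exp (-(b*δ^2)/2) * Real.exp (-(b/2) * t^2) := by
    intro t ht
    rw [← Real.exp_add, Real.exp_le_exp]
    have ht2 : δ^2 ≤ t^2 := by
      simp only [Set.mem_compl_iff, Set.mem_Ioc, not_and_or, not_lt, not_le] at ht
      rcases ht with h | h
      · nlinarith
      · nlinarith
    nlinarith
  have hmono : (∫ t in (Set.Ioc (-δ) δ)ᶜ, Real.exp (-b * t^2))
      ≤ ∫ t in (Set.Ioc (-δ) δ)ᶜ, Real.exp (-(b*δ^2)/2) * Real.exp (-(b/2) * t^2) :=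
    setIntegral_mono_on hf.integrableOn hg.integrableOn measurableSet_Ioc.compl hptwise
  have hle2 : (∫ t in (Set.Ioc (-δ) δ)ᶜ, Real.exp (-(b*δ^2)/2) * Real.exp (-(b/2) * t^2))
      ≤ ∫ t : ℝ, Real.exp (-(b*δ^2)/2) * Real.exp (-(b/2) * t^2) :=
    setIntegral_le_integral hg (Filter.Eventually.of_forall fun t => by positivity)
  have hval : (∫ t : ℝ, Real.exp (-(b*δ^2)/2) * Real.exp (-(b/2) * t^2))
      = Real.exp (-(b*δ^2)/2) * Real.sqrt (2*π/b) := by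
    rw [integral_const_mul, integral_gaussian]
    congr 2
    field_simp
  have hgauss : (∫ t : ℝ, Real.exp (-b * t^2)) = Real.sqrt (π / b) := integral_gaussian b
  rw [hIoc, abs_le]
  constructor
  · have : (∫ t in Set.Ioc (-δ) δ, Real.exp (-b * t^2)) ≥ Real.sqrt (π / b)
        - Real.exp (-(b*δ^2)/2) * Real.sqrt (2*π/b) := by
      rw [← hgauss, ← hsplit]
      have := hmono.trans (hle2.trans_eq hval)
      linarith
    linarith
  · have hle : (∫ t in Set.Ioc (-δ) δ, Real.exp (-b * t^2)) ≤ Real.sqrt (π / b) := by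
      rw [← hgauss, ← hsplit]; linarith
    have : 0 ≤ Real.exp (-(b*δ^2)/2) * Real.sqrt (2*π/b) := by positivity
    linarith

lemma sq_le_exp' {b : ℝ} (t : ℝ) (hb : 0 < b) : t^2 ≤ 4/b * Real.exp (b*t^2/4) := by
  have h : b*t^2/4 ≤ Real.exp (b*t^2/4) := le_trans (by linarith) (Real.add_one_le_exp _)
  have h2 := mul_le_mul_of_nonneg_left h (by positivity : (0:ℝ) ≤ 4/b)
  have h3 : 4/b*(b*t^2/4) = t^2 := by field_simp
  linarith

lemma pow_exp_bd1 {b : ℝ} (t : ℝ) (hb : 0 < b) :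
    t^4 * Real.exp (-b*t^2) ≤ 16/b^2 * Real.exp (-(b*t^2)/2) := by
  have h := sq_le_exp' t hb
  have h4 : t^4 ≤ (4/b)^2 * Real.exp (b*t^2/2) := by
    have := mul_le_mul h h (by positivity) (le_trans (by positivity) h)
    calc t^4 = t^2 * t^2 := by ring
      _ ≤ (4/b * Real.exp (b*t^2/4)) * (4/b * Real.exp (b*t^2/4)) := this
      _ = (4/b)^2 * (Real.exp (b*t^2/4) * Real.exp (b*t^2/4)) := by ring
      _ = (4/b)^2 * Real.exp (b*t^2/2) := by rw [← Real.exp_add]; ring_nf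
  calc t^4 * Real.exp (-b*t^2) ≤ ((4/b)^2 * Real.exp (b*t^2/2)) * Real.exp (-b*t^2) := by
        exact mul_le_mul_of_nonneg_right h4 (Real.exp_pos _).le
    _ = 16/b^2 * Real.exp (-(b*t^2)/2) := by
        rw [mul_assoc, ← Real.exp_add]; ring_nf
  
lemma pow_exp_bd2 {b : ℝ} (t : ℝ) (hb : 0 < b) :
    t^6 * Real.exp (-b*t^2) ≤ 64/b^3 * Real.exp (-(b*t^2)/4) := by
  have h := sq_le_exp' t hb
  have hE := (Real.exp_pos (b*t^2/4)).le
  have ht2 : (0:ℝ) ≤ t^2 := sq_nonneg t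
  have h6 : t^6 ≤ (4/b)^3 * Real.exp (3*(b*t^2/4)) := by
    have h3 : (t^2)^3 ≤ (4/b * Real.exp (b*t^2/4))^3 := by
      apply pow_le_pow_left₀ ht2 h
    calc t^6 = (t^2)^3 := by ring
      _ ≤ (4/b * Real.exp (b*t^2/4))^3 := h3
      _ = (4/b)^3 * (Real.exp (b*t^2/4))^3 := by ring
      _ = (4/b)^3 * Real.exp (3*(b*t^2/4)) := by
          rw [← Real.exp_nat_mul]; norm_num
  calc t^6 * Real.exp (-b*t^2) ≤ ((4/b)^3 * Real.exp (3*(b*t^2/4))) * Real.exp (-b*t^2) := by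
        exact mul_le_mul_of_nonneg_right h6 (Real.exp_pos _).le
    _ = 64/b^3 * Real.exp (-(b*t^2)/4) := by
        rw [mul_assoc, ← Real.exp_add]; ring_nf

lemma gauss_int_le {b δ : ℝ} (hb : 0 < b) (hδ : 0 ≤ δ) :
    (∫ t in (-δ)..δ, Real.exp (-b*t^2)) ≤ Real.sqrt (π/b) := by
  rw [intervalIntegral.integral_of_le (by linarith : -δ ≤ δ)]
  have hf : Integrable fun t : ℝ => Real.exp (-b*t^2) := integrable_exp_neg_mul_sq hb
  calc (∫ t in Set.Ioc (-δ) δ, Real.exp (-b*t^2)) ≤ ∫ t : ℝ, Real.exp (-b*t^2) :=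
        setIntegral_le_integral hf (Filter.Eventually.of_forall fun t => (Real.exp_pos _).le)
    _ = Real.sqrt (π/b) := integral_gaussian b
lemma contDiff_deriv_step {n : ℕ} {f : ℝ → ℝ} (h : ContDiff ℝ ((n:ℕ)+1) f) :
    ContDiff ℝ (n:ℕ) (deriv f) := by
  have h' : ContDiff ℝ ((n : WithTop ℕ∞) + 1) f := by exact_mod_cast h
  exact (contDiff_succ_iff_deriv.mp h').2.2

set_option maxHeartbeats 2000000 in
/-- Laplace asymptotics for the committor normalization:
`N(σ) = (√π σ/ω₀) e^{2V₀(x₀*)/σ²} (1 + O(σ²))` as `σ → 0`. -/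
theorem committor_normalization_laplace_asymptotics
    (V : ℝ → ℝ) (hV : ContDiff ℝ 4 V) (xm x0 xp : ℝ)
    (hlt1 : xm < x0) (hlt2 : x0 < xp)
    (hmono : StrictMonoOn V (Set.Icc xm x0))
    (hanti : StrictAntiOn V (Set.Icc x0 xp))
    (ω₀ : ℝ) (hω : 0 < ω₀) (hcurv : deriv (deriv V) x0 = -ω₀ ^ 2) :
    ∃ C > 0, ∃ σ₀ > 0, ∀ σ : ℝ, 0 < σ → σ ≤ σ₀ →
      |ω₀ * (∫ x in xm..xp, Real.exp (2 * V x / σ ^ 2)) *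
          Real.exp (-2 * V x0 / σ ^ 2) / (Real.sqrt π * σ) - 1| ≤ C * σ ^ 2 := by
  -- abbreviations
  have hVd : Differentiable ℝ V := hV.differentiable (by norm_num)
  have hC3 : ContDiff ℝ 3 (deriv V) := contDiff_deriv_step hV
  have hC2 : ContDiff ℝ 2 (deriv (deriv V)) := contDiff_deriv_step hC3
  have hC1 : ContDiff ℝ 1 (deriv (deriv (deriv V))) := contDiff_deriv_step hC2
  have hd4c : Continuous (deriv (deriv (deriv (deriv V)))) := hC1.continuous_deriv le_rfl
  set dV := deriv V with hdV_def
  set d2V := deriv dV with hd2V_def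
  set d3V := deriv d2V with hd3V_def
  set d4V := deriv d3V with hd4V_def
  have hdVd : Differentiable ℝ dV := hC3.differentiable (by norm_num)
  have hd2Vd : Differentiable ℝ d2V := hC2.differentiable (by norm_num)
  have hd3Vd : Differentiable ℝ d3V := hC1.differentiable (by norm_num)
  -- V has max at x0 on [xm, xp]
  have Vmax : ∀ x ∈ Set.Icc xm xp, V x ≤ V x0 := by
    intro x hx
    rcases le_total x x0 with h | h
    · exact hmono.monotoneOn ⟨hx.1, h⟩ (Set.right_mem_Icc.2 hlt1.le) h
    · exact hanti.antitoneOn (Set.left_mem_Icc.2 hlt2.le) ⟨h, hx.2⟩ h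
  have hdV0 : dV x0 = 0 := by
    have hmem : Set.Icc xm xp ∈ nhds x0 := Icc_mem_nhds hlt1 hlt2
    have : IsLocalMax V x0 := Filter.eventually_iff_exists_mem.mpr ⟨_, hmem, Vmax⟩
    exact this.deriv_eq_zero
  -- constants
  set A := ω₀ ^ 2 with hA_def
  have hA : 0 < A := by positivity
  set c := -(d3V x0) / 3 with hc_def
  set g : ℝ → ℝ := fun x => 2*V x0 - 2*V x - A*(x-x0)^2 - c*(x-x0)^3 with hg_def
  set g1 : ℝ → ℝ := fun x => -2*dV x - 2*A*(x-x0) - 3*c*(x-x0)^2 with hg1_def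
  set g2 : ℝ → ℝ := fun x => -2*d2V x - 2*A - 6*c*(x-x0) with hg2_def
  set g3 : ℝ → ℝ := fun x => -2*d3V x - 6*c with hg3_def
  set g4 : ℝ → ℝ := fun x => -2*d4V x with hg4_def
  have hsq : ∀ s : ℝ, HasDerivAt (fun x : ℝ => (x - x0)^2) (2*(s-x0)) s := by
    intro s
    exact (((hasDerivAt_id s).sub_const x0).pow 2).congr_deriv (by simp)
  have hcb : ∀ s : ℝ, HasDerivAt (fun x : ℝ => (x - x0)^3) (3*(s-x0)^2) s := by
    intro s
    exact (((hasDerivAt_id s).sub_const x0).pow 3).congr_deriv (by simp)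
  have hgder : ∀ s, HasDerivAt g (g1 s) s := by
    intro s
    have h1 : HasDerivAt V (dV s) s := (hVd s).hasDerivAt
    have H := (((hasDerivAt_const s (2*V x0)).sub (h1.const_mul 2)).sub
      ((hsq s).const_mul A)).sub ((hcb s).const_mul c)
    convert H using 1
    show -2*dV s - 2*A*(s-x0) - 3*c*(s-x0)^2 = _
    ring
    all_goals rfl
  have hg1der : ∀ s, HasDerivAt g1 (g2 s) s := by
    intro s
    have h1 : HasDerivAt dV (d2V s) s := (hdVd s).hasDerivAt
    have hlin : HasDerivAt (fun x : ℝ => x - x0) 1 s := (hasDerivAt_id s).sub_const x0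
    have H := ((h1.const_mul (-2)).sub ((hlin.const_mul (2*A)))).sub ((hsq s).const_mul (3*c))
    have hfun : g1 = fun x => -2*dV x - (2*A)*(x-x0) - (3*c)*(x-x0)^2 := by
      funext x; show -2*dV x - 2*A*(x-x0) - 3*c*(x-x0)^2 = _; ring
    rw [hfun]
    convert H using 1
    show -2*d2V s - 2*A - 6*c*(s-x0) = _
    ring
    all_goals rfl
  have hg2der : ∀ s, HasDerivAt g2 (g3 s) s := by
    intro s
    have h1 : HasDerivAt d2V (d3V s) s := (hd2Vd s).hasDerivAt
    have hlin : HasDerivAt (fun x : ℝ => x - x0) 1 s := (hasDerivAt_id s).sub_const x0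
    have H := ((h1.const_mul (-2)).sub_const (2*A)).sub (hlin.const_mul (6*c))
    have hfun : g2 = fun x => -2*d2V x - 2*A - (6*c)*(x-x0) := by
      funext x; show -2*d2V x - 2*A - 6*c*(x-x0) = _; ring
    rw [hfun]
    convert H using 1
    show -2*d3V s - 6*c = _
    ring
    all_goals rfl
  have hg3der : ∀ s, HasDerivAt g3 (g4 s) s := by
    intro s
    have h1 : HasDerivAt d3V (d4V s) s := (hd3Vd s).hasDerivAt
    have H := (h1.const_mul (-2)).sub_const (6*c)
    exact H
  have hg_x0 : g x0 = 0 := by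
    show 2*V x0 - 2*V x0 - A*(x0-x0)^2 - c*(x0-x0)^3 = 0; ring
  have hg1_x0 : g1 x0 = 0 := by
    show -2*dV x0 - 2*A*(x0-x0) - 3*c*(x0-x0)^2 = 0; rw [hdV0]; ring
  have hg2_x0 : g2 x0 = 0 := by
    show -2*d2V x0 - 2*A - 6*c*(x0-x0) = 0; rw [hcurv]; ring
  have hg3_x0 : g3 x0 = 0 := by
    show -2*d3V x0 - 6*c = 0; rw [hc_def]; ring
  -- the window
  set δ₀ := min (x0 - xm) (xp - x0) with hδ₀_def
  have hδ₀pos : 0 < δ₀ := lt_min (by linarith) (by linarith)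
  have hδ₀m : δ₀ ≤ x0 - xm := min_le_left _ _
  have hδ₀p : δ₀ ≤ xp - x0 := min_le_right _ _
  -- bound on fourth derivative
  obtain ⟨M0, hM0⟩ : ∃ M0, ∀ x ∈ Set.Icc (x0-δ₀) (x0+δ₀), ‖g4 x‖ ≤ M0 := by
    apply IsCompact.exists_bound_of_continuousOn isCompact_Icc
    exact (continuous_const.mul hd4c).continuousOn.congr (by intro x _; show g4 x = -2*d4V x; rfl)
  set M := max M0 1 with hM_def
  have hM1 : (1:ℝ) ≤ M := le_max_right _ _
  have hMpos : (0:ℝ) < M := lt_of_lt_of_le one_pos hM1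
  have hg4bd : ∀ x ∈ Set.Icc (x0-δ₀) (x0+δ₀), |g4 x| ≤ M * |x - x0| ^ 0 := by
    intro x hx
    rw [pow_zero, mul_one]
    have := hM0 x hx
    rw [Real.norm_eq_abs] at this
    exact this.trans (le_max_left _ _)
  have hlo : x0 - δ₀ ≤ x0 := by linarith
  have hhi : x0 ≤ x0 + δ₀ := by linarith
  have hB3 := poly_bound 0 hMpos.le hlo hhi hg3der hg3_x0 hg4bd
  have hB2 := poly_bound 1 hMpos.le hlo hhi hg2der hg2_x0 hB3
  have hB1 := poly_bound 2 hMpos.le hlo hhi hg1der hg1_x0 hB2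
  have hB0 := poly_bound 3 hMpos.le hlo hhi hgder hg_x0 hB1
  -- choose δ
  set D := |c| + M * δ₀ + 1 with hD_def
  have hDpos : 0 < D := by positivity
  set δ := min δ₀ (A / (2*D)) with hδ_def
  have hδpos : 0 < δ := lt_min hδ₀pos (by positivity)
  have hδδ₀ : δ ≤ δ₀ := min_le_left _ _
  have hδD : δ ≤ A / (2*D) := min_le_right _ _
  have hsmall : |c| * δ + M * δ^2 ≤ A / 2 := by
    have hδD' : δ * (2*D) ≤ A := by
      rw [le_div_iff₀ (by positivity : (0:ℝ) < 2*D)] at hδD; exact hδD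
    have h1 : |c| * δ + M * δ^2 ≤ δ * D := by
      have hMδ : M * δ ≤ M * δ₀ := mul_le_mul_of_nonneg_left hδδ₀ hMpos.le
      have h1a : M * δ^2 ≤ (M*δ₀)*δ := by
        have he : M * δ^2 = (M*δ)*δ := by ring
        rw [he]
        exact mul_le_mul_of_nonneg_right hMδ hδpos.le
      have hD : δ * D = |c| * δ + (M*δ₀)*δ + δ := by rw [hD_def]; ring
      linarith [hδpos.le]
    linarith [h1, hδD']
  -- remainder bounds for |x - x0| ≤ δ
  have habs4 : ∀ y : ℝ, |y|^4 = y^4 := fun y => by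
    rw [show (4:ℕ)=2*2 from rfl, pow_mul, sq_abs, ← pow_mul]
  have hgbd : ∀ x, |x - x0| ≤ δ → |g x| ≤ M * (x-x0)^4 := by
    intro x hx
    have hxJ : x ∈ Set.Icc (x0-δ₀) (x0+δ₀) := by
      rw [Set.mem_Icc]; rw [abs_le] at hx
      constructor <;> linarith [hx.1, hx.2]
    have h5 := hB0 x hxJ
    have h6 : M * |x - x0| ^ (3+1) = M * (x-x0)^4 := by
      rw [show (3+1)=4 from rfl, habs4]
    linarith [h5, h6.le, h6.ge]
  have hsqle : ∀ x, |x - x0| ≤ δ → (x-x0)^2 ≤ δ^2 := by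
    intro x hx
    rw [← sq_abs]
    exact pow_le_pow_left₀ (abs_nonneg _) hx 2
  have hwbd : ∀ x, |x - x0| ≤ δ → |c*(x-x0)^3 + g x| ≤ (A/2) * (x-x0)^2 := by
    intro x hx
    have h1 := hgbd x hx
    have h2 : |c*(x-x0)^3| ≤ |c| * δ * (x-x0)^2 := by
      rw [abs_mul, abs_pow]
      have h3 : |x-x0|^3 ≤ δ * (x-x0)^2 := by
        have h3' : |x-x0|^3 = |x-x0| * |x-x0|^2 := by ring
        rw [h3', sq_abs]
        exact mul_le_mul_of_nonneg_right hx (sq_nonneg _)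
      rw [mul_assoc]
      exact mul_le_mul_of_nonneg_left h3 (abs_nonneg c)
    have h40 : (x-x0)^4 ≤ δ^2*(x-x0)^2 := by
      calc (x-x0)^4 = (x-x0)^2*(x-x0)^2 := by ring
        _ ≤ δ^2*(x-x0)^2 := mul_le_mul_of_nonneg_right (hsqle x hx) (sq_nonneg _)
    have h4 : M * (x-x0)^4 ≤ M * δ^2 * (x-x0)^2 := by
      have := mul_le_mul_of_nonneg_left h40 hMpos.le
      linarith [this]
    calc |c*(x-x0)^3 + g x| ≤ |c*(x-x0)^3| + |g x| := abs_add_le _ _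
      _ ≤ |c| * δ * (x-x0)^2 + M * δ^2 * (x-x0)^2 := by linarith
      _ = (|c| * δ + M * δ^2) * (x-x0)^2 := by ring
      _ ≤ (A/2) * (x-x0)^2 := mul_le_mul_of_nonneg_right hsmall (sq_nonneg _)
  have hwbd2 : ∀ x, |x - x0| ≤ δ → |c*(x-x0)^3 + g x| ≤ (|c| + M*δ) * |x-x0|^3 := by
    intro x hx
    have h1 := hgbd x hx
    have h2 : |c*(x-x0)^3| ≤ |c| * |x-x0|^3 := by rw [abs_mul, abs_pow]
    have hx4 : (x-x0)^4 = |x-x0|^3 * |x-x0| := by rw [← habs4 (x-x0)]; ring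
    have h41 : |x-x0|^3 * |x-x0| ≤ |x-x0|^3 * δ := by
      exact mul_le_mul_of_nonneg_left hx (pow_nonneg (abs_nonneg _) 3)
    have h4 : M * (x-x0)^4 ≤ M * δ * |x-x0|^3 := by
      rw [hx4]
      calc M*(|x-x0|^3*|x-x0|) ≤ M*(|x-x0|^3*δ) := mul_le_mul_of_nonneg_left h41 hMpos.le
        _ = M * δ * |x-x0|^3 := by ring
    calc |c*(x-x0)^3 + g x| ≤ |c*(x-x0)^3| + |g x| := abs_add_le _ _
      _ ≤ |c| * |x-x0|^3 + M * δ * |x-x0|^3 := by linarith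
      _ = (|c| + M*δ) * |x-x0|^3 := by ring
  -- pointwise inner estimate
  set Kc := 16*M/A^2 + 1536*(|c| + M*δ)^2/A^3 with hKc_def
  have hKcpos : 0 < Kc := by positivity
  have hpoint : ∀ σ : ℝ, 0 < σ → ∀ x : ℝ, |x - x0| ≤ δ →
      |Real.exp ((2*V x - 2*V x0)/σ^2) - Real.exp (-(A/σ^2) * (x-x0)^2)
        + c/σ^2 * ((x-x0)^3 * Real.exp (-(A/σ^2) * (x-x0)^2))|
      ≤ Kc * σ^2 * Real.exp (-(A/(8*σ^2)) * (x-x0)^2) := by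
    intro σ hσ x hx
    have hσ2 : (0:ℝ) < σ^2 := by positivity
    have hdivle : ∀ p q : ℝ, p ≤ q → p/σ^2 ≤ q/σ^2 := fun p q h => by gcongr
    set t := x - x0 with ht_def
    set w := (c*t^3 + g x)/σ^2 with hw_def
    have hgx : g x = 2*V x0 - 2*V x - A*t^2 - c*t^3 := rfl
    have harg : (2*V x - 2*V x0)/σ^2 = -(A/σ^2)*t^2 + -w := by
      rw [hw_def]
      have hnum : 2*V x - 2*V x0 = -(A*t^2) - (c*t^3 + g x) := by rw [hgx]; ring
      rw [hnum]; field_simp; ring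
    rw [harg, Real.exp_add]
    have hfac : Real.exp (-(A/σ^2)*t^2) * Real.exp (-w) - Real.exp (-(A/σ^2)*t^2)
        + c/σ^2 * (t^3 * Real.exp (-(A/σ^2)*t^2))
        = Real.exp (-(A/σ^2)*t^2) * (Real.exp (-w) - 1 + c*t^3/σ^2) := by ring
    rw [hfac, abs_mul, abs_of_pos (Real.exp_pos _)]
    have hwsplit : Real.exp (-w) - 1 + c*t^3/σ^2 = (Real.exp (-w) - 1 + w) - g x/σ^2 := by
      have hws : w - g x/σ^2 = c*t^3/σ^2 := by rw [hw_def]; ring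
      rw [← hws]; ring
    have hgxb : |g x / σ^2| ≤ M*t^4/σ^2 := by
      rw [abs_div, abs_of_pos hσ2]
      exact hdivle _ _ (hgbd x hx)
    have hinner : |Real.exp (-w) - 1 + c*t^3/σ^2| ≤ 3*w^2*Real.exp |w| + M*t^4/σ^2 := by
      rw [hwsplit]
      calc |(Real.exp (-w) - 1 + w) - g x/σ^2|
          ≤ |Real.exp (-w) - 1 + w| + |g x/σ^2| := abs_sub _ _
        _ ≤ 3*w^2*Real.exp |w| + M*t^4/σ^2 := add_le_add (exp_taylor_bd w) hgxb
    have hwabs : |w| ≤ (A/2)*t^2/σ^2 := by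
      rw [hw_def, abs_div, abs_of_pos hσ2]
      exact hdivle _ _ (hwbd x hx)
    have hew : Real.exp (-(A/σ^2)*t^2) * Real.exp |w| ≤ Real.exp (-(A/(2*σ^2))*t^2) := by
      rw [← Real.exp_add, Real.exp_le_exp]
      have heq : (A/2)*t^2/σ^2 = (A/σ^2)*t^2 - (A/(2*σ^2))*t^2 := by field_simp; ring
      linarith [hwabs]
    have habs6 : |t|^6 = t^6 := by
      rw [show (6:ℕ)=2*3 from rfl, pow_mul, sq_abs, ← pow_mul]
    have hw2 : w^2 ≤ (|c| + M*δ)^2 * t^6 / σ^4 := by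
      have h1 : |w| ≤ (|c| + M*δ) * |t|^3 / σ^2 := by
        rw [hw_def, abs_div, abs_of_pos hσ2]
        exact hdivle _ _ (hwbd2 x hx)
      have h3 : |w|^2 ≤ ((|c| + M*δ) * |t|^3 / σ^2)^2 :=
        pow_le_pow_left₀ (abs_nonneg w) h1 2
      have h4 : ((|c| + M*δ) * |t|^3 / σ^2)^2 = (|c| + M*δ)^2 * |t|^6 / σ^4 := by ring
      rw [h4, habs6] at h3
      rw [← sq_abs w]
      exact h3
    -- exp comparisons
    have h8 : A/(8*σ^2) ≤ A/(2*σ^2) := by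
      rw [div_le_div_iff₀ (by positivity) (by positivity)]
      exact mul_le_mul_of_nonneg_left (by linarith only [hσ2] : 2*σ^2 ≤ 8*σ^2) hA.le
    have hE28 : Real.exp (-(A/(2*σ^2))*t^2) ≤ Real.exp (-(A/(8*σ^2))*t^2) := by
      rw [Real.exp_le_exp]
      have h9 := mul_le_mul_of_nonneg_right h8 (sq_nonneg t)
      linarith only [h9]
    have hb1 : (0:ℝ) < A/σ^2 := by positivity
    have hb2 : (0:ℝ) < A/(2*σ^2) := by positivity
    -- term 1
    have hterm1 : Real.exp (-(A/σ^2)*t^2) * (M*t^4/σ^2)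
        ≤ (16*M/A^2) * σ^2 * Real.exp (-(A/(8*σ^2))*t^2) := by
      have h2 : t^4 * Real.exp (-(A/σ^2)*t^2) ≤ 16*σ^4/A^2 * Real.exp (-(A/(2*σ^2))*t^2) := by
        have hh := pow_exp_bd1 t hb1
        rw [show (16:ℝ)/(A/σ^2)^2 = 16*σ^4/A^2 from by rw [div_pow, div_div_eq_mul_div]; ring,
          show -((A/σ^2)*t^2)/2 = -(A/(2*σ^2))*t^2 from by ring] at hh
        exact hh
      calc Real.exp (-(A/σ^2)*t^2) * (M*t^4/σ^2)
          = (M/σ^2) * (t^4 * Real.exp (-(A/σ^2)*t^2)) := by ring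
        _ ≤ (M/σ^2) * (16*σ^4/A^2 * Real.exp (-(A/(2*σ^2))*t^2)) := by
            apply mul_le_mul_of_nonneg_left h2 (by positivity)
        _ ≤ (M/σ^2) * (16*σ^4/A^2 * Real.exp (-(A/(8*σ^2))*t^2)) := by
            apply mul_le_mul_of_nonneg_left _ (by positivity)
            exact mul_le_mul_of_nonneg_left hE28 (by positivity)
        _ = (16*M/A^2) * σ^2 * Real.exp (-(A/(8*σ^2))*t^2) := by field_simp
    -- term 2
    have hterm2 : 3*w^2 * Real.exp (-(A/(2*σ^2))*t^2)
        ≤ (1536*(|c| + M*δ)^2/A^3) * σ^2 * Real.exp (-(A/(8*σ^2))*t^2) := by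
      have h2 : t^6 * Real.exp (-(A/(2*σ^2))*t^2) ≤ 512*σ^6/A^3 * Real.exp (-(A/(8*σ^2))*t^2) := by
        have hh := pow_exp_bd2 t hb2
        rw [show (64:ℝ)/(A/(2*σ^2))^3 = 512*σ^6/A^3 from by rw [div_pow, div_div_eq_mul_div]; ring,
          show -((A/(2*σ^2))*t^2)/4 = -(A/(8*σ^2))*t^2 from by ring] at hh
        exact hh
      calc 3*w^2 * Real.exp (-(A/(2*σ^2))*t^2)
          ≤ 3*((|c| + M*δ)^2 * t^6 / σ^4) * Real.exp (-(A/(2*σ^2))*t^2) := by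
            apply mul_le_mul_of_nonneg_right _ (Real.exp_pos _).le
            linarith [hw2]
        _ = (3*(|c| + M*δ)^2/σ^4) * (t^6 * Real.exp (-(A/(2*σ^2))*t^2)) := by ring
        _ ≤ (3*(|c| + M*δ)^2/σ^4) * (512*σ^6/A^3 * Real.exp (-(A/(8*σ^2))*t^2)) := by
            apply mul_le_mul_of_nonneg_left h2 (by positivity)
        _ = (1536*(|c| + M*δ)^2/A^3) * σ^2 * Real.exp (-(A/(8*σ^2))*t^2) := by
            field_simp; ring
    -- assemble
    calc Real.exp (-(A/σ^2)*t^2) * |Real.exp (-w) - 1 + c*t^3/σ^2|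
        ≤ Real.exp (-(A/σ^2)*t^2) * (3*w^2*Real.exp |w| + M*t^4/σ^2) := by
          apply mul_le_mul_of_nonneg_left hinner (Real.exp_pos _).le
      _ = 3*w^2 * (Real.exp (-(A/σ^2)*t^2) * Real.exp |w|)
          + Real.exp (-(A/σ^2)*t^2) * (M*t^4/σ^2) := by ring
      _ ≤ 3*w^2 * Real.exp (-(A/(2*σ^2))*t^2) + Real.exp (-(A/σ^2)*t^2) * (M*t^4/σ^2) := by
          have := mul_le_mul_of_nonneg_left hew (by positivity : (0:ℝ) ≤ 3*w^2)
          linarith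
      _ ≤ (1536*(|c| + M*δ)^2/A^3) * σ^2 * Real.exp (-(A/(8*σ^2))*t^2)
          + (16*M/A^2) * σ^2 * Real.exp (-(A/(8*σ^2))*t^2) := add_le_add hterm2 hterm1
      _ = Kc * σ^2 * Real.exp (-(A/(8*σ^2))*t^2) := by rw [hKc_def]; ring
  -- tail constants
  have hxmle : xm ≤ x0 - δ := by linarith [hδδ₀, hδ₀m]
  have hxple : x0 + δ ≤ xp := by linarith [hδδ₀, hδ₀p]
  set ηm := 2*V x0 - 2*V (x0-δ) with hηm_def
  set ηp := 2*V x0 - 2*V (x0+δ) with hηp_def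
  have hηm : 0 < ηm := by
    have h := hmono ⟨hxmle, by linarith⟩ (Set.right_mem_Icc.2 hlt1.le) (by linarith : x0-δ < x0)
    rw [hηm_def]; linarith
  have hηp : 0 < ηp := by
    have h := hanti (Set.left_mem_Icc.2 hlt2.le) ⟨by linarith, hxple⟩ (by linarith : x0 < x0+δ)
    rw [hηp_def]; linarith
  have hπ : (0:ℝ) < Real.sqrt π := Real.sqrt_pos.mpr Real.pi_pos
  set Cb := Kc * Real.sqrt (8*π/A) + (2/(A*δ^2)) * Real.sqrt (2*π/A)
      + (xp-xm)*(27/ηm^3) + (xp-xm)*(27/ηp^3) with hCb_def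
  have hCbpos : 0 < Cb := by
    have h1 : (0:ℝ) < Kc * Real.sqrt (8*π/A) := by positivity
    have h2 : (0:ℝ) < (2/(A*δ^2)) * Real.sqrt (2*π/A) := by positivity
    have h3 : (0:ℝ) < (xp-xm)*(27/ηm^3) := mul_pos (by linarith) (by positivity)
    have h4 : (0:ℝ) < (xp-xm)*(27/ηp^3) := mul_pos (by linarith) (by positivity)
    rw [hCb_def]; linarith
  refine ⟨ω₀*Cb/Real.sqrt π, by positivity, 1, one_pos, ?_⟩
  intro σ hσ hσ1
  have hσ2 : (0:ℝ) < σ^2 := by positivity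
  have hdivle : ∀ p q : ℝ, p ≤ q → p/σ^2 ≤ q/σ^2 := fun p q h => by gcongr
  set F : ℝ → ℝ := fun x => Real.exp ((2*V x - 2*V x0)/σ^2) with hF_def
  have hVc : Continuous V := hV.continuous
  have hFc : Continuous F := (((continuous_const.mul hVc).sub continuous_const).div_const (σ^2)).rexp
  set Gau : ℝ → ℝ := fun t => Real.exp (-(A/σ^2)*t^2) with hGau_def
  have hGc : Continuous Gau := (continuous_const.mul (continuous_pow 2)).rexp
  set Cub : ℝ → ℝ := fun t => c/σ^2 * (t^3 * Gau t) with hCub_def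
  have hCc : Continuous Cub := continuous_const.mul ((continuous_pow 3).mul hGc)
  set Env : ℝ → ℝ := fun t => Kc*σ^2*Real.exp (-(A/(8*σ^2))*t^2) with hEnv_def
  have hEc : Continuous Env := continuous_const.mul ((continuous_const.mul (continuous_pow 2)).rexp)
  have hFtc : Continuous fun t => F (t+x0) := hFc.comp (continuous_id.add continuous_const)
  -- relate target to F
  have hIeq : (∫ x in xm..xp, Real.exp (2*V x/σ^2)) * Real.exp (-2*V x0/σ^2)
      = ∫ x in xm..xp, F x := by
    rw [← intervalIntegral.integral_mul_const]
    apply intervalIntegral.integral_congr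
    intro x _
    show Real.exp (2*V x/σ^2) * Real.exp (-2*V x0/σ^2) = Real.exp ((2*V x - 2*V x0)/σ^2)
    rw [← Real.exp_add]
    congr 1
    ring
  -- split the domain
  have hi1 : IntervalIntegrable F volume xm (x0-δ) := hFc.intervalIntegrable _ _
  have hi2 : IntervalIntegrable F volume (x0-δ) (x0+δ) := hFc.intervalIntegrable _ _
  have hi3 : IntervalIntegrable F volume (x0+δ) xp := hFc.intervalIntegrable _ _
  have hsplit : (∫ x in xm..(x0-δ), F x) + (∫ x in (x0-δ)..(x0+δ), F x)
      + (∫ x in (x0+δ)..xp, F x) = ∫ x in xm..xp, F x := by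
    rw [intervalIntegral.integral_add_adjacent_intervals hi1 hi2]
    exact intervalIntegral.integral_add_adjacent_intervals
      (hFc.intervalIntegrable _ _) hi3
  -- tails
  have hT1nn : (0:ℝ) ≤ ∫ x in xm..(x0-δ), F x :=
    intervalIntegral.integral_nonneg hxmle (fun x _ => (Real.exp_pos _).le)
  have hT2nn : (0:ℝ) ≤ ∫ x in (x0+δ)..xp, F x :=
    intervalIntegral.integral_nonneg hxple (fun x _ => (Real.exp_pos _).le)
  have hexpcube : ∀ η : ℝ, 0 < η → Real.exp (-η/σ^2) ≤ 27/η^3*σ^6 := by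
    intro η hη
    have hu : (0:ℝ) < η/σ^2 := by positivity
    have h1 := exp_neg_le_cube hu
    rw [show -η/σ^2 = -(η/σ^2) from by ring]
    calc Real.exp (-(η/σ^2)) ≤ 27/(η/σ^2)^3 := h1
      _ = 27/η^3*σ^6 := by field_simp
  have htail1 : (∫ x in xm..(x0-δ), F x) ≤ (xp-xm)*(27/ηm^3)*σ^6 := by
    have hb1 : ∀ x ∈ Set.Icc xm (x0-δ), F x ≤ Real.exp (-ηm/σ^2) := by
      intro x hx
      apply Real.exp_le_exp.mpr
      have hVx : V x ≤ V (x0-δ) :=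
        hmono.monotoneOn ⟨hx.1, by linarith [hx.2]⟩ ⟨hxmle, by linarith⟩ hx.2
      have : 2*V x - 2*V x0 ≤ -ηm := by rw [hηm_def]; linarith
      calc (2*V x - 2*V x0)/σ^2 ≤ (-ηm)/σ^2 := hdivle _ _ this
        _ = -ηm/σ^2 := by ring
    have h2 := intervalIntegral.integral_mono_on hxmle hi1
      (intervalIntegrable_const) hb1
    rw [intervalIntegral.integral_const, smul_eq_mul] at h2
    have h3 := hexpcube ηm hηm
    have h4 : (x0-δ-xm) * Real.exp (-ηm/σ^2) ≤ (xp-xm) * (27/ηm^3*σ^6) := by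
      apply mul_le_mul (by linarith) h3 (Real.exp_pos _).le (by linarith)
    calc (∫ x in xm..(x0-δ), F x) ≤ (x0-δ-xm) * Real.exp (-ηm/σ^2) := h2
      _ ≤ (xp-xm) * (27/ηm^3*σ^6) := h4
      _ = (xp-xm)*(27/ηm^3)*σ^6 := by ring
  have htail2 : (∫ x in (x0+δ)..xp, F x) ≤ (xp-xm)*(27/ηp^3)*σ^6 := by
    have hb1 : ∀ x ∈ Set.Icc (x0+δ) xp, F x ≤ Real.exp (-ηp/σ^2) := by
      intro x hx
      apply Real.exp_le_exp.mpr
      have hVx : V x ≤ V (x0+δ) :=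
        hanti.antitoneOn ⟨by linarith, hxple⟩ ⟨by linarith [hx.1], hx.2⟩ hx.1
      have : 2*V x - 2*V x0 ≤ -ηp := by rw [hηp_def]; linarith
      calc (2*V x - 2*V x0)/σ^2 ≤ (-ηp)/σ^2 := hdivle _ _ this
        _ = -ηp/σ^2 := by ring
    have h2 := intervalIntegral.integral_mono_on hxple hi3
      (intervalIntegrable_const) hb1
    rw [intervalIntegral.integral_const, smul_eq_mul] at h2
    have h3 := hexpcube ηp hηp
    have h4 : (xp-(x0+δ)) * Real.exp (-ηp/σ^2) ≤ (xp-xm) * (27/ηp^3*σ^6) := by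
      apply mul_le_mul (by linarith) h3 (Real.exp_pos _).le (by linarith)
    calc (∫ x in (x0+δ)..xp, F x) ≤ (xp-(x0+δ)) * Real.exp (-ηp/σ^2) := h2
      _ ≤ (xp-xm) * (27/ηp^3*σ^6) := h4
      _ = (xp-xm)*(27/ηp^3)*σ^6 := by ring
  -- substitution for inner region
  have hsub : (∫ x in (x0-δ)..(x0+δ), F x) = ∫ t in (-δ)..δ, F (t+x0) := by
    have h := intervalIntegral.integral_comp_add_right (a := -δ) (b := δ) (f := F) x0
    rw [show -δ + x0 = x0 - δ from by ring, show δ + x0 = x0 + δ from by ring] at h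
    exact h.symm
  have hdiffint : (∫ t in (-δ)..δ, (F (t+x0) - Gau t + Cub t))
      = (∫ t in (-δ)..δ, F (t+x0)) - (∫ t in (-δ)..δ, Gau t) + (∫ t in (-δ)..δ, Cub t) := by
    rw [intervalIntegral.integral_add (f := fun t => F (t+x0) - Gau t) (g := Cub) ((hFtc.sub hGc).intervalIntegrable _ _)
      (hCc.intervalIntegrable _ _),
      intervalIntegral.integral_sub (hFtc.intervalIntegrable _ _) (hGc.intervalIntegrable _ _)]
  have hCub0 : (∫ t in (-δ)..δ, Cub t) = 0 := by
    have h : (∫ t in (-δ)..δ, Cub t)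
        = c/σ^2 * ∫ t in (-δ)..δ, t^3 * Real.exp (-(A/σ^2) * t^2) := by
      rw [hCub_def, intervalIntegral.integral_const_mul]
    rw [h, odd_cube_int (A/σ^2) δ, mul_zero]
  -- envelope estimate for the inner difference
  have henv : |∫ t in (-δ)..δ, (F (t+x0) - Gau t + Cub t)|
      ≤ Kc*σ^2*(Real.sqrt (8*π/A) * σ) := by
    have hae : ∀ᵐ t ∂(volume.restrict (Set.uIoc (-δ) δ)),
        ‖F (t+x0) - Gau t + Cub t‖ ≤ Env t := by
      apply Filter.eventually_of_mem (self_mem_ae_restrict measurableSet_uIoc)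
      intro t ht
      rw [Set.uIoc_of_le (by linarith : -δ ≤ δ)] at ht
      have htabs : |t| ≤ δ := abs_le.mpr ⟨ht.1.le, ht.2⟩
      have hx' : |(t+x0) - x0| ≤ δ := by
        rw [show (t+x0) - x0 = t from by ring]; exact htabs
      have hp := hpoint σ hσ (t+x0) hx'
      rw [show (t+x0) - x0 = t from by ring] at hp
      rw [Real.norm_eq_abs]
      exact hp
    have hbd := intervalIntegral.norm_integral_le_abs_of_norm_le hae (hEc.intervalIntegrable _ _)
    rw [Real.norm_eq_abs] at hbd
    have hEnvint : (∫ t in (-δ)..δ, Env t)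
        = Kc*σ^2 * ∫ t in (-δ)..δ, Real.exp (-(A/(8*σ^2))*t^2) := by
      rw [hEnv_def, intervalIntegral.integral_const_mul]
    have hgle : (∫ t in (-δ)..δ, Real.exp (-(A/(8*σ^2))*t^2))
        ≤ Real.sqrt (8*π/A) * σ := by
      have h1 := gauss_int_le (b := A/(8*σ^2)) (by positivity) hδpos.le
      have h2 : Real.sqrt (π/(A/(8*σ^2))) = Real.sqrt (8*π/A) * σ := by
        rw [show π/(A/(8*σ^2)) = (8*π/A)*σ^2 from by rw [div_div_eq_mul_div]; ring,
          Real.sqrt_mul (by positivity), Real.sqrt_sq hσ.le]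
      rw [← h2]
      exact h1
    have hEnvnn : (0:ℝ) ≤ ∫ t in (-δ)..δ, Env t :=
      intervalIntegral.integral_nonneg (by linarith) (fun t _ => by positivity)
    have h3 : |∫ t in (-δ)..δ, Env t| = ∫ t in (-δ)..δ, Env t := abs_of_nonneg hEnvnn
    calc |∫ t in (-δ)..δ, (F (t+x0) - Gau t + Cub t)| ≤ |∫ t in (-δ)..δ, Env t| := hbd
      _ = ∫ t in (-δ)..δ, Env t := h3
      _ = Kc*σ^2 * ∫ t in (-δ)..δ, Real.exp (-(A/(8*σ^2))*t^2) := hEnvint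
      _ ≤ Kc*σ^2 * (Real.sqrt (8*π/A) * σ) := by
          apply mul_le_mul_of_nonneg_left hgle (by positivity)
  -- gaussian completion
  have hgt : |(∫ t in (-δ)..δ, Gau t) - Real.sqrt π*σ/ω₀|
      ≤ 2*σ^2/(A*δ^2) * (Real.sqrt (2*π/A)*σ) := by
    have h1 := gauss_tail (b := A/σ^2) (δ := δ) (by positivity) hδpos.le
    have hv1 : Real.sqrt (π/(A/σ^2)) = Real.sqrt π*σ/ω₀ := by
      have he : π/(A/σ^2) = (Real.sqrt π*σ/ω₀)^2 := by
        rw [hA_def]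
        rw [div_pow, mul_pow, Real.sq_sqrt Real.pi_pos.le]
        field_simp
      rw [he, Real.sqrt_sq (by positivity)]
    have hv2 : Real.sqrt (2*π/(A/σ^2)) = Real.sqrt (2*π/A)*σ := by
      rw [show 2*π/(A/σ^2) = (2*π/A)*σ^2 from by rw [div_div_eq_mul_div]; ring,
        Real.sqrt_mul (by positivity), Real.sqrt_sq hσ.le]
    have hv3 : Real.exp (-((A/σ^2)*δ^2)/2) ≤ 2*σ^2/(A*δ^2) := by
      have hu : (0:ℝ) < (A/σ^2)*δ^2/2 := by positivity
      have h2 := exp_neg_le_inv hu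
      rw [show -((A/σ^2)*δ^2)/2 = -((A/σ^2)*δ^2/2) from by ring]
      calc Real.exp (-((A/σ^2)*δ^2/2)) ≤ 1/((A/σ^2)*δ^2/2) := h2
        _ = 2*σ^2/(A*δ^2) := by field_simp
    rw [hv1, hv2] at h1
    calc |(∫ t in (-δ)..δ, Gau t) - Real.sqrt π*σ/ω₀|
        ≤ Real.exp (-((A/σ^2)*δ^2)/2) * (Real.sqrt (2*π/A)*σ) := h1
      _ ≤ 2*σ^2/(A*δ^2) * (Real.sqrt (2*π/A)*σ) := by
          apply mul_le_mul_of_nonneg_right hv3 (by positivity)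
  -- inner estimate
  have hinnerest : |(∫ x in (x0-δ)..(x0+δ), F x) - Real.sqrt π*σ/ω₀|
      ≤ Kc*σ^2*(Real.sqrt (8*π/A)*σ) + 2*σ^2/(A*δ^2)*(Real.sqrt (2*π/A)*σ) := by
    rw [hsub]
    have hdec : (∫ t in (-δ)..δ, F (t+x0)) - Real.sqrt π*σ/ω₀
        = (∫ t in (-δ)..δ, (F (t+x0) - Gau t + Cub t))
          + ((∫ t in (-δ)..δ, Gau t) - Real.sqrt π*σ/ω₀) := by
      rw [hdiffint, hCub0]; ring
    rw [hdec]
    exact (abs_add_le _ _).trans (add_le_add henv hgt)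
  -- total estimate
  have hσ63 : σ^6 ≤ σ^3 := by
    calc σ^6 = σ^3 * σ^3 := by ring
      _ ≤ 1 * σ^3 := by
          apply mul_le_mul_of_nonneg_right _ (by positivity)
          calc σ^3 ≤ 1^3 := pow_le_pow_left₀ hσ.le hσ1 3
            _ = 1 := one_pow 3
      _ = σ^3 := one_mul _
  have htotal : |(∫ x in xm..xp, F x) - Real.sqrt π*σ/ω₀| ≤ Cb*σ^3 := by
    rw [← hsplit]
    have hre : (∫ x in xm..(x0-δ), F x) + (∫ x in (x0-δ)..(x0+δ), F x)
        + (∫ x in (x0+δ)..xp, F x) - Real.sqrt π*σ/ω₀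
        = ((∫ x in (x0-δ)..(x0+δ), F x) - Real.sqrt π*σ/ω₀)
          + ((∫ x in xm..(x0-δ), F x) + (∫ x in (x0+δ)..xp, F x)) := by ring
    rw [hre]
    have h5 : |(∫ x in xm..(x0-δ), F x) + (∫ x in (x0+δ)..xp, F x)|
        ≤ (xp-xm)*(27/ηm^3)*σ^6 + (xp-xm)*(27/ηp^3)*σ^6 := by
      rw [abs_of_nonneg (by linarith)]
      linarith
    have h6 := (abs_add_le _ _).trans (add_le_add hinnerest h5)
    have h7 : Kc*σ^2*(Real.sqrt (8*π/A)*σ) + 2*σ^2/(A*δ^2)*(Real.sqrt (2*π/A)*σ)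
        = (Kc*Real.sqrt (8*π/A) + (2/(A*δ^2))*Real.sqrt (2*π/A)) * σ^3 := by ring
    have h8 : (xp-xm)*(27/ηm^3)*σ^6 + (xp-xm)*(27/ηp^3)*σ^6
        ≤ ((xp-xm)*(27/ηm^3) + (xp-xm)*(27/ηp^3)) * σ^3 := by
      have c1 : (0:ℝ) ≤ (xp-xm)*(27/ηm^3) := mul_nonneg (by linarith) (by positivity)
      have c2 : (0:ℝ) ≤ (xp-xm)*(27/ηp^3) := mul_nonneg (by linarith) (by positivity)
      have h9 := mul_le_mul_of_nonneg_left hσ63 (add_nonneg c1 c2)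
      calc (xp-xm)*(27/ηm^3)*σ^6 + (xp-xm)*(27/ηp^3)*σ^6
          = ((xp-xm)*(27/ηm^3) + (xp-xm)*(27/ηp^3)) * σ^6 := by ring
        _ ≤ ((xp-xm)*(27/ηm^3) + (xp-xm)*(27/ηp^3)) * σ^3 := h9
    rw [hCb_def]
    calc |((∫ x in (x0-δ)..(x0+δ), F x) - Real.sqrt π*σ/ω₀)
          + ((∫ x in xm..(x0-δ), F x) + (∫ x in (x0+δ)..xp, F x))|
        ≤ Kc*σ^2*(Real.sqrt (8*π/A)*σ) + 2*σ^2/(A*δ^2)*(Real.sqrt (2*π/A)*σ)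
          + ((xp-xm)*(27/ηm^3)*σ^6 + (xp-xm)*(27/ηp^3)*σ^6) := h6
      _ ≤ (Kc*Real.sqrt (8*π/A) + (2/(A*δ^2))*Real.sqrt (2*π/A)) * σ^3
          + ((xp-xm)*(27/ηm^3) + (xp-xm)*(27/ηp^3)) * σ^3 := by
          rw [h7]
          linarith [h8]
      _ = (Kc * Real.sqrt (8*π/A) + (2/(A*δ^2)) * Real.sqrt (2*π/A)
          + (xp-xm)*(27/ηm^3) + (xp-xm)*(27/ηp^3))*σ^3 := by ring
  -- final algebra
  have hIT : ω₀ * (∫ x in xm..xp, Real.exp (2*V x/σ^2)) * Real.exp (-2*V x0/σ^2)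
      = ω₀ * ∫ x in xm..xp, F x := by rw [mul_assoc, hIeq]
  rw [show ω₀ * (∫ x in xm..xp, Real.exp (2 * V x / σ ^ 2)) * Real.exp (-2 * V x0 / σ ^ 2)
      = ω₀ * ∫ x in xm..xp, F x from hIT]
  have hkey : ω₀ * (∫ x in xm..xp, F x)/(Real.sqrt π*σ) - 1
      = (ω₀/(Real.sqrt π*σ)) * ((∫ x in xm..xp, F x) - Real.sqrt π*σ/ω₀) := by
    field_simp
  rw [hkey, abs_mul, abs_of_pos (by positivity : (0:ℝ) < ω₀/(Real.sqrt π*σ))]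
  calc (ω₀/(Real.sqrt π*σ)) * |(∫ x in xm..xp, F x) - Real.sqrt π*σ/ω₀|
      ≤ (ω₀/(Real.sqrt π*σ)) * (Cb*σ^3) := by
        apply mul_le_mul_of_nonneg_left htotal (by positivity)
    _ = (ω₀*Cb/Real.sqrt π) * σ^2 := by field_simp
end

section
/- (Divergence-free property of the drift correction) Let V : ℝ² → ℝ smooth satisfy the Hamilton–Jacobi equation (∂ₓV)² + b∂ₓV + ερ²(∂_yV)² + ε∂_yV = (σ²/2)(∂ₓₓV + ∂ₓb + ερ²∂_{yy}V). Define the vector field c = (1/ε)(b + ∂ₓV) eₓ + (1 + ρ²∂_yV) e_y. Then ∇·(e^{-2V/σ²} c) = 0. -/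
open Real

/-- Partial derivative in the `x` direction. -/
noncomputable def pdx (f : ℝ × ℝ → ℝ) (p : ℝ × ℝ) : ℝ := fderiv ℝ f p (1, 0)

/-- Partial derivative in the `y` direction. -/
noncomputable def pdy (f : ℝ × ℝ → ℝ) (p : ℝ × ℝ) : ℝ := fderiv ℝ f p (0, 1)

/-- If `V` solves the Hamilton–Jacobi-type equation, then the vector field
`c = ((b + ∂ₓV)/ε, 1 + ρ²∂_yV)` satisfies `∇·(e^{-2V/σ²} c) = 0`. -/
theorem drift_correction_divergence_free
    (b V : ℝ × ℝ → ℝ) (hb : ContDiff ℝ (⊤ : ℕ∞) b) (hV : ContDiff ℝ (⊤ : ℕ∞) V)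
    (σ ε ρ : ℝ) (hσ : 0 < σ) (hε : 0 < ε) (hρ : 0 < ρ)
    (hHJ : ∀ p : ℝ × ℝ,
      (pdx V p) ^ 2 + b p * pdx V p + ε * ρ ^ 2 * (pdy V p) ^ 2 + ε * pdy V p
        = σ ^ 2 / 2 * (pdx (pdx V) p + pdx b p + ε * ρ ^ 2 * pdy (pdy V) p)) :
    ∀ p : ℝ × ℝ,
      pdx (fun q => Real.exp (-2 * V q / σ ^ 2) * ((b q + pdx V q) / ε)) p +
        pdy (fun q => Real.exp (-2 * V q / σ ^ 2) * (1 + ρ ^ 2 * pdy V q)) p = 0 := by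
  intro p
  have hσ2 : σ ^ 2 ≠ 0 := pow_ne_zero _ hσ.ne'
  have hεne : ε ≠ 0 := hε.ne'
  -- smoothness facts
  have hVd : Differentiable ℝ V := hV.differentiable (by simp)
  have hbd : Differentiable ℝ b := hb.differentiable (by simp)
  have hpdxV : ContDiff ℝ (⊤ : ℕ∞) (pdx V) :=
    (hV.fderiv_right (by simp)).clm_apply contDiff_const
  have hpdyV : ContDiff ℝ (⊤ : ℕ∞) (pdy V) :=
    (hV.fderiv_right (by simp)).clm_apply contDiff_const
  have hpdxVd : Differentiable ℝ (pdx V) := hpdxV.differentiable (by simp)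
  have hpdyVd : Differentiable ℝ (pdy V) := hpdyV.differentiable (by simp)
  -- the exponential weight
  set w : ℝ × ℝ → ℝ := fun q => -2 * V q / σ ^ 2 with hw
  have hweq : w = fun q => (-2 / σ ^ 2) * V q := by
    funext q; simp only [hw]; ring
  have hwd : Differentiable ℝ w := by
    rw [hweq]; exact (differentiable_const _).mul hVd
  have hfw : ∀ (v : ℝ × ℝ), fderiv ℝ w p v = (-2 / σ ^ 2) * fderiv ℝ V p v := by
    intro v
    rw [hweq, fderiv_const_mul (hVd p)]
    simp
  have hexp : DifferentiableAt ℝ (fun q => Real.exp (w q)) p := (hwd p).exp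
  -- generic product rule for exp(w) * g
  have key : ∀ (g : ℝ × ℝ → ℝ), Differentiable ℝ g → ∀ (v : ℝ × ℝ),
      fderiv ℝ (fun q => Real.exp (w q) * g q) p v =
        Real.exp (w p) * ((-2 / σ ^ 2) * fderiv ℝ V p v * g p + fderiv ℝ g p v) := by
    intro g hg v
    rw [fderiv_fun_mul hexp (hg p)]
    simp only [ContinuousLinearMap.add_apply, ContinuousLinearMap.smul_apply,
      smul_eq_mul]
    rw [fderiv_exp (hwd p)]
    simp only [ContinuousLinearMap.smul_apply, smul_eq_mul, hfw v]
    ring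
  -- the two component functions
  have hg1 : Differentiable ℝ (fun q => (b q + pdx V q) / ε) :=
    by fun_prop
  have hg2 : Differentiable ℝ (fun q => 1 + ρ ^ 2 * pdy V q) :=
    (differentiable_const _).add ((differentiable_const _).mul hpdyVd)
  have hd1 : fderiv ℝ (fun q => (b q + pdx V q) / ε) p (1, 0) =
      (pdx b p + pdx (pdx V) p) / ε := by
    have : (fun q => (b q + pdx V q) / ε) = fun q => (b q + pdx V q) * ε⁻¹ := by
      funext q; ring
    rw [this, fderiv_mul_const (c := fun q => b q + pdx V q) ((hbd p).add (hpdxVd p)), fderiv_fun_add (hbd p) (hpdxVd p)]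
    simp [pdx, div_eq_mul_inv]; ring
  have hd2 : fderiv ℝ (fun q => 1 + ρ ^ 2 * pdy V q) p (0, 1) =
      ρ ^ 2 * pdy (pdy V) p := by
    rw [fderiv_const_add, fderiv_const_mul (hpdyVd p)]
    simp [pdy]
  have h1 := key (fun q => (b q + pdx V q) / ε) hg1 (1, 0)
  have h2 := key (fun q => 1 + ρ ^ 2 * pdy V q) hg2 (0, 1)
  rw [hd1] at h1
  rw [hd2] at h2
  show fderiv ℝ (fun q => Real.exp (w q) * ((b q + pdx V q) / ε)) p (1, 0) +
      fderiv ℝ (fun q => Real.exp (w q) * (1 + ρ ^ 2 * pdy V q)) p (0, 1) = 0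
  rw [h1, h2]
  have h := hHJ p
  have hVx : fderiv ℝ V p (1, 0) = pdx V p := rfl
  have hVy : fderiv ℝ V p (0, 1) = pdy V p := rfl
  rw [hVx, hVy]
  have hE : Real.exp (w p) ≠ 0 := Real.exp_ne_zero _
  field_simp
  linear_combination (-2 * Real.exp (w p)) * h
end
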